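/- arXiv:2112.07117 — 2 statements merged into one kernel-verified Lean document; each statement's English description precedes it below -/
import Mathlib

section
/- Let E be a smooth, strictly convex, reflexive Banach space and F : E → E* a monotone mapping with R(J^E + t F) = E* for some t > 0. Then the resolvent J^E_t := (J^E + t F)^{−1} J^E is a firmly nonexpansive type mapping: for all u, v ∈ E, ⟨J^E_t u − J^E_t v, J^E(J^E_t u) − J^E(J^E_t v)⟩ ≤ ⟨J^E_t u − J^E_t v, J^E u − J^E v⟩. -/
open NormedSpace

section Resolvent

variable {E : Type*} [AddCommGroup E] [Module ℝ E] [TopologicalSpace E]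

theorem resolvent_pairing_eq (J F : E → StrongDual ℝ E) (t : ℝ) (R : E → E)
    (hR : ∀ u, J u = J (R u) + t • F (R u)) (u v : E) :
    (J u - J v) (R u - R v) =
      (J (R u) - J (R v)) (R u - R v) + t * (F (R u) - F (R v)) (R u - R v) := by
  rw [hR u, hR v]
  simp only [sub_apply, add_apply, smul_apply, smul_eq_mul]
  ring

theorem resolvent_pairing_le (J F : E → StrongDual ℝ E)
    (hF : ∀ x y : E, (F x - F y) (x - y) ≥ 0) {t : ℝ} (ht : 0 ≤ t) (R : E → E)
    (hR : ∀ u, J u = J (R u) + t • F (R u)) (u v : E) :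
    (J (R u) - J (R v)) (R u - R v) ≤ (J u - J v) (R u - R v) := by
  rw [resolvent_pairing_eq J F t R hR u v]
  have := mul_nonneg ht (hF (R u) (R v))
  linarith

end Resolvent

theorem stmt7_general {E : Type*} [NormedAddCommGroup E] [NormedSpace ℝ E]
    (J : E → StrongDual ℝ E)
    (F : E → StrongDual ℝ E) (hF : ∀ x y : E, (F x - F y) (x - y) ≥ 0)
    (t : ℝ) (ht : 0 < t)
    (R : E → E) (hR : ∀ u : E, J u = J (R u) + t • F (R u)) :
    ∀ u v : E,
      (J (R u) - J (R v)) (R u - R v) ≤ (J u - J v) (R u - R v) :=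
  resolvent_pairing_le J F hF ht.le R hR

theorem stmt7 {E : Type*} [NormedAddCommGroup E] [NormedSpace ℝ E]
    (p : ℝ) (hp : 1 < p)
    (J : E → StrongDual ℝ E)
    (hJ : ∀ x, J x x = ‖x‖ ^ p ∧ ‖J x‖ = ‖x‖ ^ (p - 1))
    (F : E → StrongDual ℝ E) (hF : ∀ x y : E, (F x - F y) (x - y) ≥ 0)
    (t : ℝ) (ht : 0 < t)
    (R : E → E) (hR : ∀ u : E, J u = J (R u) + t • F (R u)) :
    ∀ u v : E,
      (J (R u) - J (R v)) (R u - R v) ≤ (J u - J v) (R u - R v) :=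
  stmt7_general J F hF t ht R hR
end

section
/- Let E be a real uniformly convex Banach space, r > 0, and B_r(0) := {x ∈ E : ‖x‖ ≤ r}. Then there exists a continuous, strictly increasing, convex function g : [0, ∞) → [0, ∞) with g(0) = 0 such that for every x, y ∈ B_r(0) and every selections j^E(x) ∈ J^E(x), j^E(y) ∈ J^E(y), one has ⟨x − y, j^E(x) − j^E(y)⟩ ≥ g(‖x − y‖). -/
/-!
For duality pairs, `(jx - jy) (x - y) ≥ (‖x‖ ^ (p - 1) - ‖y‖ ^ (p - 1)) (‖x‖ - ‖y‖) ≥ 0`.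
When the norms of `x` and `y` are far apart this is already bounded below. Otherwise the unit
vectors `x / ‖x‖` and `y / ‖y‖` are far apart, so by uniform convexity their sum has norm at most
`2 - δ`, which adds `δ (‖x‖ ^ (p - 1) ‖y‖ + ‖x‖ ‖y‖ ^ (p - 1))` to the bound. Hence the infimum
`h t` of the pairing over pairs in the ball at distance at least `t` is monotone and positive for
`t > 0`. A primitive of a monotone function is convex, so `g s = ∫₀ˢ h / max 1 (2 r)` is a
convex, strictly increasing minorant of `h` on `[0, 2 r]`.
-/

section Primitive

variable {f : ℝ → ℝ}

theorem Monotone.mul_sub_le_integral (hf : Monotone f) {a b : ℝ} (hab : a ≤ b) :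
    f a * (b - a) ≤ ∫ u in a..b, f u :=
  calc f a * (b - a) = ∫ _ in a..b, f a := by simp [mul_comm]
    _ ≤ ∫ u in a..b, f u := intervalIntegral.integral_mono_on hab intervalIntegrable_const
        hf.intervalIntegrable fun _ hu => hf hu.1

theorem Monotone.integral_le_mul_sub (hf : Monotone f) {a b : ℝ} (hab : a ≤ b) :
    ∫ u in a..b, f u ≤ f b * (b - a) :=
  calc ∫ u in a..b, f u ≤ ∫ _ in a..b, f b := intervalIntegral.integral_mono_on hab
        hf.intervalIntegrable intervalIntegrable_const fun _ hu => hf hu.2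
    _ = f b * (b - a) := by simp [mul_comm]

theorem Monotone.convexOn_primitive (hf : Monotone f) (a : ℝ) :
    ConvexOn ℝ Set.univ fun s => ∫ u in a..s, f u := by
  refine convexOn_of_slope_mono_adjacent convex_univ fun {x y z} _ _ hxy hyz => ?_
  simp only [intervalIntegral.integral_interval_sub_left hf.intervalIntegrable
    hf.intervalIntegrable]
  calc (∫ u in x..y, f u) / (y - x) ≤ f y :=
        (div_le_iff₀ (sub_pos.2 hxy)).2 (hf.integral_le_mul_sub hxy.le)
    _ ≤ (∫ u in y..z, f u) / (z - y) :=
        (le_div_iff₀ (sub_pos.2 hyz)).2 (hf.mul_sub_le_integral hyz.le)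

theorem exists_strictMonoOn_convexOn_le_of_monotone (hf : Monotone f) (hf0 : 0 ≤ f 0)
    (hpos : ∀ t, 0 < t → 0 < f t) (R : ℝ) :
    ∃ g : ℝ → ℝ, Continuous g ∧ StrictMonoOn g (Set.Ici 0) ∧ ConvexOn ℝ (Set.Ici 0) g ∧
      g 0 = 0 ∧ ∀ t ∈ Set.Icc 0 R, g t ≤ f t := by
  set M := max 1 R
  have hM : 0 < M := lt_max_of_lt_left one_pos
  set ψ : ℝ → ℝ := fun u => f u / M
  have hψ : Monotone ψ := hf.div_const hM.le
  refine ⟨fun s => ∫ u in 0..s, ψ u, intervalIntegral.continuous_primitive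
    (fun _ _ => hψ.intervalIntegrable) 0, ?_, (hψ.convexOn_primitive 0).subset
    (Set.subset_univ _) (convex_Ici 0), intervalIntegral.integral_same, ?_⟩
  · intro a ha b _ hab
    simp only
    rw [← sub_pos, intervalIntegral.integral_interval_sub_left hψ.intervalIntegrable
      hψ.intervalIntegrable]
    exact intervalIntegral.intervalIntegral_pos_of_pos_on hψ.intervalIntegrable
      (fun u hu => div_pos (hpos u (lt_of_le_of_lt ha hu.1)) hM) hab
  · rintro t ⟨ht0, htR⟩
    have hft : 0 ≤ f t := hf0.trans (hf ht0)
    calc ∫ u in 0..t, ψ u ≤ f t / M * (t - 0) := hψ.integral_le_mul_sub ht0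
      _ = f t * (t / M) := by ring
      _ ≤ f t * 1 := mul_le_mul_of_nonneg_left
          ((div_le_one hM).2 (htR.trans (le_max_right 1 R))) hft
      _ = f t := mul_one _

end Primitive

section DualityPair

variable {E : Type*} [NormedAddCommGroup E] [NormedSpace ℝ E] {p : ℝ} {x y : E}
  {f jx jy : StrongDual ℝ E}

def IsDualityPair (p : ℝ) (x : E) (f : StrongDual ℝ E) : Prop :=
  f x = ‖x‖ ^ p ∧ ‖f‖ = ‖x‖ ^ (p - 1)

namespace IsDualityPair

theorem apply_le (h : IsDualityPair p x f) (z : E) : f z ≤ ‖x‖ ^ (p - 1) * ‖z‖ :=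
  h.2 ▸ (le_abs_self _).trans (f.le_opNorm z)

theorem apply_self (h : IsDualityPair p x f) (hp : p ≠ 0) : f x = ‖x‖ ^ (p - 1) * ‖x‖ := by
  rw [h.1, ← Real.rpow_add_one' (norm_nonneg x) (by simpa), sub_add_cancel]

theorem apply_normalize (h : IsDualityPair p x f) (hp : p ≠ 0) (hx : x ≠ 0) :
    f (‖x‖⁻¹ • x) = ‖x‖ ^ (p - 1) := by
  rw [map_smul, smul_eq_mul, h.apply_self hp]
  field_simp [norm_ne_zero_iff.2 hx]

theorem rpow_sub_mul_sub_le_pairing (hx : IsDualityPair p x jx) (hy : IsDualityPair p y jy)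
    (hp : p ≠ 0) :
    (‖x‖ ^ (p - 1) - ‖y‖ ^ (p - 1)) * (‖x‖ - ‖y‖) ≤ (jx - jy) (x - y) := by
  have hxy := hx.apply_le y
  have hyx := hy.apply_le x
  simp only [sub_apply, map_sub, hx.apply_self hp, hy.apply_self hp]
  linear_combination hxy + hyx

theorem pairing_nonneg (hx : IsDualityPair p x jx) (hy : IsDualityPair p y jy) (hp : 1 ≤ p) :
    0 ≤ (jx - jy) (x - y) := by
  refine le_trans ?_ (hx.rpow_sub_mul_sub_le_pairing hy (by positivity))
  have hq : 0 ≤ p - 1 := sub_nonneg.2 hp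
  rcases le_total ‖x‖ ‖y‖ with h | h
  · exact mul_nonneg_of_nonpos_of_nonpos
      (sub_nonpos.2 (Real.rpow_le_rpow (norm_nonneg x) h hq)) (sub_nonpos.2 h)
  · exact mul_nonneg (sub_nonneg.2 (Real.rpow_le_rpow (norm_nonneg y) h hq)) (sub_nonneg.2 h)

theorem le_pairing_of_normalize (hx : IsDualityPair p x jx) (hy : IsDualityPair p y jy)
    (hp : p ≠ 0) (hx0 : x ≠ 0) (hy0 : y ≠ 0) :
    (‖x‖ ^ (p - 1) - ‖y‖ ^ (p - 1)) * (‖x‖ - ‖y‖) +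
        (2 - ‖‖x‖⁻¹ • x + ‖y‖⁻¹ • y‖) * (‖x‖ ^ (p - 1) * ‖y‖ + ‖x‖ * ‖y‖ ^ (p - 1)) ≤
      (jx - jy) (x - y) := by
  set u := ‖x‖⁻¹ • x
  set v := ‖y‖⁻¹ • y
  have hjxv : jx v ≤ ‖x‖ ^ (p - 1) * ‖u + v‖ - ‖x‖ ^ (p - 1) := by
    have := hx.apply_le (u + v)
    rw [map_add, hx.apply_normalize hp hx0] at this
    linarith
  have hjyu : jy u ≤ ‖y‖ ^ (p - 1) * ‖u + v‖ - ‖y‖ ^ (p - 1) := by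
    have := hy.apply_le (u + v)
    rw [map_add, hy.apply_normalize hp hy0] at this
    linarith
  have hjxy : jx y = ‖y‖ * jx v := by
    rw [map_smul, smul_eq_mul, mul_inv_cancel_left₀ (norm_ne_zero_iff.2 hy0)]
  have hjyx : jy x = ‖x‖ * jy u := by
    rw [map_smul, smul_eq_mul, mul_inv_cancel_left₀ (norm_ne_zero_iff.2 hx0)]
  simp only [sub_apply, map_sub, hx.apply_self hp, hy.apply_self hp,
    hjxy, hjyx]
  linarith [mul_le_mul_of_nonneg_left hjxv (norm_nonneg y),
    mul_le_mul_of_nonneg_left hjyu (norm_nonneg x)]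

theorem mul_rpow_le_pairing_of_norm_add_le (hx : IsDualityPair p x jx)
    (hy : IsDualityPair p y jy) (hp : 1 < p) {s δ : ℝ} (hs : 0 < s) (hδ : 0 ≤ δ)
    (hsy : s ≤ ‖y‖) (hyx : ‖y‖ ≤ ‖x‖) (hsum : ‖‖x‖⁻¹ • x + ‖y‖⁻¹ • y‖ ≤ 2 - δ) :
    δ * (s ^ (p - 1) * s) ≤ (jx - jy) (x - y) := by
  have hq : 0 ≤ p - 1 := by linarith
  refine le_trans ?_ (hx.le_pairing_of_normalize hy (by positivity)
    (norm_pos_iff.1 (by linarith)) (norm_pos_iff.1 (by linarith)))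
  have hmono : 0 ≤ (‖x‖ ^ (p - 1) - ‖y‖ ^ (p - 1)) * (‖x‖ - ‖y‖) :=
    mul_nonneg (sub_nonneg.2 (by gcongr)) (sub_nonneg.2 hyx)
  have hxy_pow : s ^ (p - 1) * s ≤ ‖x‖ ^ (p - 1) * ‖y‖ := by
    gcongr; linarith
  have hyx_pow : 0 ≤ ‖x‖ * ‖y‖ ^ (p - 1) := by positivity
  calc δ * (s ^ (p - 1) * s)
      ≤ δ * (‖x‖ ^ (p - 1) * ‖y‖ + ‖x‖ * ‖y‖ ^ (p - 1)) := by gcongr; linarith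
    _ ≤ (2 - ‖‖x‖⁻¹ • x + ‖y‖⁻¹ • y‖) * (‖x‖ ^ (p - 1) * ‖y‖ + ‖x‖ * ‖y‖ ^ (p - 1)) := by
      gcongr
      linarith
    _ ≤ _ := le_add_of_nonneg_left hmono

end IsDualityPair

theorem norm_sub_le_mul_norm_normalize_sub (hx : x ≠ 0) (hy : y ≠ 0) :
    ‖x - y‖ ≤ ‖x‖ * ‖‖x‖⁻¹ • x - ‖y‖⁻¹ • y‖ + |‖x‖ - ‖y‖| := by
  have hxy : x - y = ‖x‖ • (‖x‖⁻¹ • x - ‖y‖⁻¹ • y) + (‖x‖ - ‖y‖) • (‖y‖⁻¹ • y) := by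
    rw [smul_sub, sub_smul, smul_inv_smul₀ (norm_ne_zero_iff.2 hx),
      smul_inv_smul₀ (norm_ne_zero_iff.2 hy)]
    abel
  calc ‖x - y‖ ≤ ‖‖x‖ • (‖x‖⁻¹ • x - ‖y‖⁻¹ • y)‖ + ‖(‖x‖ - ‖y‖) • (‖y‖⁻¹ • y)‖ :=
        hxy ▸ norm_add_le _ _
    _ = ‖x‖ * ‖‖x‖⁻¹ • x - ‖y‖⁻¹ • y‖ + |‖x‖ - ‖y‖| := by
        rw [norm_smul, norm_smul, norm_smul, norm_inv, norm_norm, norm_norm,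
          inv_mul_cancel₀ (norm_ne_zero_iff.2 hy), Real.norm_eq_abs, mul_one]

theorem exists_pos_le_pairing [UniformConvexSpace E] (hp : 1 < p) (r : ℝ) {t : ℝ} (ht : 0 < t) :
    ∃ c > 0, ∀ (x y : E) (jx jy : StrongDual ℝ E), ‖x‖ ≤ r → ‖y‖ ≤ r →
      IsDualityPair p x jx → IsDualityPair p y jy → t ≤ ‖x - y‖ → c ≤ (jx - jy) (x - y) := by
  have hq : 0 < p - 1 := sub_pos.2 hp
  have hp0 : p ≠ 0 := by positivity
  have ht4 : 0 < t / 4 := by positivity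
  rcases le_or_gt r 0 with hr | hr
  · exact ⟨1, one_pos, fun x y _ _ hx hy _ _ hxy => absurd ((hxy.trans (norm_sub_le x y)).trans
      (add_le_add hx hy)) (by linarith)⟩
  obtain ⟨m, hm, hm_le⟩ := isCompact_Icc.exists_forall_le' (a := 0)
    (f := fun b : ℝ => (b + t / 4) ^ (p - 1) - b ^ (p - 1)) (s := Set.Icc 0 r)
    ((((continuous_id.add continuous_const).rpow_const fun _ => Or.inr hq.le).sub
      (continuous_id.rpow_const fun _ => Or.inr hq.le)).continuousOn)
    fun b hb => sub_pos.2 (Real.rpow_lt_rpow hb.1 (by linarith) hq)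
  obtain ⟨δ, hδ, huc⟩ := exists_forall_closed_ball_dist_add_le_two_sub E
    (by positivity : 0 < t / (2 * r))
  refine ⟨min (m * (t / 4)) (δ * ((t / 4) ^ (p - 1) * (t / 4))), by positivity, ?_⟩
  intro x y jx jy hxr hyr hjx hjy hxy
  wlog hyx : ‖y‖ ≤ ‖x‖ generalizing x y jx jy
  · rw [show (jx - jy) (x - y) = (jy - jx) (y - x) by simp only [sub_apply, map_sub]; ring]
    exact this y x jy jx hyr hxr hjy hjx (norm_sub_rev x y ▸ hxy) (le_of_not_ge hyx)
  have hxt : t / 2 ≤ ‖x‖ := by linarith [norm_sub_le x y]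
  by_cases hfar : ‖y‖ + t / 4 ≤ ‖x‖
  · refine (min_le_left _ _).trans (le_trans ?_ (hjx.rpow_sub_mul_sub_le_pairing hjy hp0))
    have hgap : m ≤ ‖x‖ ^ (p - 1) - ‖y‖ ^ (p - 1) :=
      (hm_le _ ⟨norm_nonneg y, hyr⟩).trans (by gcongr)
    exact mul_le_mul hgap (by linarith) ht4.le (hm.le.trans hgap)
  · have hx0 : x ≠ 0 := norm_pos_iff.1 (by linarith)
    have hy0 : y ≠ 0 := norm_pos_iff.1 (by linarith)
    have hsep : t / (2 * r) ≤ ‖‖x‖⁻¹ • x - ‖y‖⁻¹ • y‖ := by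
      have := norm_sub_le_mul_norm_normalize_sub hx0 hy0
      rw [abs_of_nonneg (sub_nonneg.2 hyx)] at this
      rw [div_le_iff₀ (by positivity)]
      nlinarith [norm_nonneg (‖x‖⁻¹ • x - ‖y‖⁻¹ • y)]
    have hsum : ‖‖x‖⁻¹ • x + ‖y‖⁻¹ • y‖ ≤ 2 - δ := by
      simpa using huc (norm_smul_inv_norm (𝕜 := ℝ) hx0).le (norm_smul_inv_norm (𝕜 := ℝ) hy0).le
        (by simpa using hsep)
    exact (min_le_right _ _).trans (hjx.mul_rpow_le_pairing_of_norm_add_le hjy hp ht4 hδ.le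
      (by linarith) hyx hsum)

def dualityPairings (E : Type*) [NormedAddCommGroup E] [NormedSpace ℝ E] (p r t : ℝ) : Set ℝ :=
  {s | ∃ (x y : E) (jx jy : StrongDual ℝ E), ‖x‖ ≤ r ∧ ‖y‖ ≤ r ∧ IsDualityPair p x jx ∧
    IsDualityPair p y jy ∧ t ≤ ‖x - y‖ ∧ (jx - jy) (x - y) = s}

/-- The `1` keeps the infimum away from the junk value `sInf ∅ = 0` once `t > 2 r`. -/
noncomputable def pairingModulus (E : Type*) [NormedAddCommGroup E] [NormedSpace ℝ E]
    (p r t : ℝ) : ℝ :=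
  sInf (insert 1 (dualityPairings E p r t))

theorem zero_mem_lowerBounds_insert_dualityPairings (hp : 1 ≤ p) (r t : ℝ) :
    0 ∈ lowerBounds (insert 1 (dualityPairings E p r t)) := by
  rintro _ (rfl | ⟨x, y, jx, jy, -, -, hjx, hjy, -, rfl⟩)
  · exact zero_le_one
  · exact hjx.pairing_nonneg hjy hp

theorem pairingModulus_nonneg (hp : 1 ≤ p) (r t : ℝ) : 0 ≤ pairingModulus E p r t :=
  le_csInf (Set.insert_nonempty _ _) (zero_mem_lowerBounds_insert_dualityPairings hp r t)

theorem pairingModulus_mono (hp : 1 ≤ p) (r : ℝ) : Monotone (pairingModulus E p r) := by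
  intro t₁ t₂ ht
  refine csInf_le_csInf ⟨0, zero_mem_lowerBounds_insert_dualityPairings hp r t₁⟩
    (Set.insert_nonempty _ _) (Set.insert_subset_insert ?_)
  rintro _ ⟨x, y, jx, jy, hx, hy, hjx, hjy, hxy, rfl⟩
  exact ⟨x, y, jx, jy, hx, hy, hjx, hjy, ht.trans hxy, rfl⟩

theorem pairingModulus_pos [UniformConvexSpace E] (hp : 1 < p) (r : ℝ) {t : ℝ} (ht : 0 < t) :
    0 < pairingModulus E p r t := by
  obtain ⟨c, hc, hc_le⟩ := exists_pos_le_pairing (E := E) hp r ht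
  refine (lt_min hc one_pos).trans_le (le_csInf (Set.insert_nonempty _ _) ?_)
  rintro _ (rfl | ⟨x, y, jx, jy, hx, hy, hjx, hjy, hxy, rfl⟩)
  · exact min_le_right _ _
  · exact (min_le_left _ _).trans (hc_le x y jx jy hx hy hjx hjy hxy)

theorem pairingModulus_le_pairing (hp : 1 ≤ p) {r : ℝ} {x y : E} {jx jy : StrongDual ℝ E}
    (hx : ‖x‖ ≤ r) (hy : ‖y‖ ≤ r) (hjx : IsDualityPair p x jx) (hjy : IsDualityPair p y jy) :
    pairingModulus E p r ‖x - y‖ ≤ (jx - jy) (x - y) :=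
  csInf_le ⟨0, zero_mem_lowerBounds_insert_dualityPairings hp r _⟩
    (Set.mem_insert_of_mem _ ⟨x, y, jx, jy, hx, hy, hjx, hjy, le_rfl, rfl⟩)

end DualityPair

theorem stmt11_general {E : Type*} [NormedAddCommGroup E] [NormedSpace ℝ E] [UniformConvexSpace E]
    (p r : ℝ) (hp : 1 < p) :
    ∃ g : ℝ → ℝ,
      ContinuousOn g (Set.Ici 0) ∧ StrictMonoOn g (Set.Ici 0) ∧
      ConvexOn ℝ (Set.Ici 0) g ∧ g 0 = 0 ∧ (∀ s ≥ (0:ℝ), 0 ≤ g s) ∧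
      ∀ x y : E, ‖x‖ ≤ r → ‖y‖ ≤ r →
        ∀ jx jy : StrongDual ℝ E,
          (jx x = ‖x‖ ^ p ∧ ‖jx‖ = ‖x‖ ^ (p - 1)) →
          (jy y = ‖y‖ ^ p ∧ ‖jy‖ = ‖y‖ ^ (p - 1)) →
          (jx - jy) (x - y) ≥ g ‖x - y‖ := by
  obtain ⟨g, hg_cont, hg_mono, hg_conv, hg0, hg_le⟩ :=
    exists_strictMonoOn_convexOn_le_of_monotone (pairingModulus_mono (E := E) hp.le r)
      (pairingModulus_nonneg hp.le r 0) (fun _ ht => pairingModulus_pos hp r ht) (2 * r)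
  refine ⟨g, hg_cont.continuousOn, hg_mono, hg_conv, hg0,
    fun s hs => hg0 ▸ hg_mono.monotoneOn Set.self_mem_Ici hs hs, ?_⟩
  intro x y hx hy jx jy hjx hjy
  have hxy : ‖x - y‖ ∈ Set.Icc 0 (2 * r) :=
    ⟨norm_nonneg _, (norm_sub_le x y).trans (by linarith)⟩
  exact (hg_le _ hxy).trans (pairingModulus_le_pairing hp.le hx hy hjx hjy)

theorem stmt11 {E : Type*} [NormedAddCommGroup E] [NormedSpace ℝ E] [UniformConvexSpace E]
    (p r : ℝ) (hp : 1 < p) (hr : 0 < r) :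
    ∃ g : ℝ → ℝ,
      ContinuousOn g (Set.Ici 0) ∧ StrictMonoOn g (Set.Ici 0) ∧
      ConvexOn ℝ (Set.Ici 0) g ∧ g 0 = 0 ∧ (∀ s ≥ (0:ℝ), 0 ≤ g s) ∧
      ∀ x y : E, ‖x‖ ≤ r → ‖y‖ ≤ r →
        ∀ jx jy : StrongDual ℝ E,
          (jx x = ‖x‖ ^ p ∧ ‖jx‖ = ‖x‖ ^ (p - 1)) →
          (jy y = ‖y‖ ^ p ∧ ‖jy‖ = ‖y‖ ^ (p - 1)) →
          (jx - jy) (x - y) ≥ g ‖x - y‖ :=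
  stmt11_general p r hp
end
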